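/- Let K₀ be the class of finite simple matroids A of rank at most 3 such that δ(A') ≥ 0 for all subsets A' ⊆ A, where δ(X) = |X| - Σ_{ℓ ∈ L(X)} (|ℓ| - 2). Define A ≤ B iff A ⊆ B and for all X with A ⊆ X ⊆ B, δ(X) ≥ δ(A). Then ≤ is transitive: if A ≤ B and B ≤ C then A ≤ C. -/
import Mathlib


open scoped Classical

/-- A simple matroid of rank ≤ 3 presented as a 3-hypergraph `(V, R)`:
`R` is irreflexive, symmetric, and satisfies the exchange axiom
(if `R a b c` and `R a b d` then `{a,b,c,d}` is an `R`-clique). -/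
structure PlaneGeom (V : Type) where
  R : V → V → V → Prop
  irrefl : ∀ a b c, R a b c → a ≠ b ∧ b ≠ c ∧ a ≠ c
  symm₁ : ∀ a b c, R a b c → R b a c
  symm₂ : ∀ a b c, R a b c → R a c b
  exchange : ∀ a b c d, R a b c → R a b d → c ≠ d → R a c d

/-- A line `ℓ` is based in `B` if it contains at least two points of `B`. -/
def BasedIn {V : Type} [DecidableEq V] (ℓ B : Finset V) : Prop := 2 ≤ (ℓ ∩ B).card

namespace PlaneGeom

variable {V : Type} [Fintype V] [DecidableEq V] (G : PlaneGeom V)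

/-- A set of pairwise collinear points. -/
def IsClique (s : Finset V) : Prop :=
  ∀ a ∈ s, ∀ b ∈ s, ∀ c ∈ s, a ≠ b → b ≠ c → a ≠ c → G.R a b c

/-- A (nontrivial) line of the submatroid induced on `X`: a maximal
`R`-clique in `X` of size at least 3. -/
def IsLine (X ℓ : Finset V) : Prop :=
  ℓ ⊆ X ∧ 3 ≤ ℓ.card ∧ G.IsClique ℓ ∧
    ∀ p ∈ X, p ∉ ℓ → ¬ G.IsClique (insert p ℓ)

/-- The set of nontrivial lines of the submatroid induced on `X`. -/
noncomputable def lines (X : Finset V) : Finset (Finset V) :=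
  Finset.univ.filter (fun ℓ => G.IsLine X ℓ)

/-- The predimension function `δ(X) = |X| - Σ_{ℓ ∈ L(X)} (|ℓ| - 2)`. -/
noncomputable def delta (X : Finset V) : ℤ :=
  (X.card : ℤ) - ∑ ℓ ∈ G.lines X, ((ℓ.card : ℤ) - 2)

/-- `A ≤ B` : `A` is a strong substructure of `B`. -/
def Strong (A B : Finset V) : Prop :=
  A ⊆ B ∧ ∀ X : Finset V, A ⊆ X → X ⊆ B → G.delta A ≤ G.delta X

/-- Membership in the class `K₀`: hereditarily nonnegative `δ`. -/
def InK0 (A : Finset V) : Prop := ∀ A' ⊆ A, 0 ≤ G.delta A'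

/-- `B` is a primitive strong extension of `A`. -/
def Primitive (A B : Finset V) : Prop :=
  G.Strong A B ∧ A ≠ B ∧
    ∀ B₀ : Finset V, A ⊆ B₀ → B₀ ⊆ B → G.Strong A B₀ → G.Strong B₀ B →
      B₀ = A ∨ B₀ = B

/-! ### Auxiliary development -/

lemma clique_mono {s t : Finset V} (h : s ⊆ t) (ht : G.IsClique t) : G.IsClique s :=
  fun a ha b hb c hc => ht a (h ha) b (h hb) c (h hc)

lemma star {a b p q r : V}
    (hp : p = a ∨ p = b ∨ G.R a b p) (hq : q = a ∨ q = b ∨ G.R a b q)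
    (hr : r = a ∨ r = b ∨ G.R a b r)
    (hpq : p ≠ q) (hqr : q ≠ r) (hpr : p ≠ r) : G.R p q r := by
  rcases hp with rfl | rfl | hp
  · rcases hq with rfl | rfl | hq
    · exact absurd rfl hpq
    · rcases hr with rfl | rfl | hr
      · exact absurd rfl hpr
      · exact absurd rfl hqr
      · exact hr
    · rcases hr with rfl | rfl | hr
      · exact absurd rfl hpr
      · exact G.symm₂ _ _ _ hq
      · exact G.exchange _ _ _ _ hq hr hqr
  · rcases hq with rfl | rfl | hq
    · rcases hr with rfl | rfl | hr
      · exact absurd rfl hqr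
      · exact absurd rfl hpr
      · exact G.symm₁ _ _ _ hr
    · exact absurd rfl hpq
    · rcases hr with rfl | rfl | hr
      · exact G.symm₂ _ _ _ (G.symm₁ _ _ _ hq)
      · exact absurd rfl hpr
      · exact G.exchange _ _ _ _ (G.symm₁ _ _ _ hq) (G.symm₁ _ _ _ hr) hqr
  · rcases hq with rfl | rfl | hq
    · rcases hr with rfl | rfl | hr
      · exact absurd rfl hqr
      · exact G.symm₁ _ _ _ (G.symm₂ _ _ _ hp)
      · exact G.symm₁ _ _ _ (G.exchange _ _ _ _ hp hr hpr)
    · rcases hr with rfl | rfl | hr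
      · exact G.symm₂ _ _ _ (G.symm₁ _ _ _ (G.symm₂ _ _ _ hp))
      · exact absurd rfl hqr
      · exact G.symm₁ _ _ _ (G.exchange _ _ _ _ (G.symm₁ _ _ _ hp) (G.symm₁ _ _ _ hr) hpr)
    · rcases hr with rfl | rfl | hr
      · exact G.symm₂ _ _ _ (G.symm₁ _ _ _ (G.exchange _ _ _ _ hp hq hpq))
      · exact G.symm₂ _ _ _ (G.symm₁ _ _ _
          (G.exchange _ _ _ _ (G.symm₁ _ _ _ hp) (G.symm₁ _ _ _ hq) hpq))
      · exact G.exchange _ _ _ _ (G.symm₁ _ _ _ (G.exchange _ _ _ _ hp hq hpq))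
          (G.symm₁ _ _ _ (G.exchange _ _ _ _ hp hr hpr)) hqr

lemma star_clique {a b : V} {u : Finset V}
    (h : ∀ x ∈ u, x = a ∨ x = b ∨ G.R a b x) : G.IsClique u :=
  fun p hpu q hqu r hru hpq hqr hpr =>
    G.star (h p hpu) (h q hqu) (h r hru) hpq hqr hpr

lemma exists_pair {s : Finset V} (h : 2 ≤ s.card) :
    ∃ a ∈ s, ∃ b ∈ s, a ≠ b := Finset.one_lt_card.mp h

/-- The extension of a clique `m` inside `Z`: all points of `Z` collinear with `m`. -/
noncomputable def ext (Z m : Finset V) : Finset V :=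
  Z.filter (fun p => G.IsClique (insert p m))

lemma subset_ext {X Z m : Finset V} (hm : G.IsLine X m) (hXZ : X ⊆ Z) :
    m ⊆ G.ext Z m := by
  intro p hp
  refine Finset.mem_filter.mpr ⟨hXZ (hm.1 hp), ?_⟩
  rw [Finset.insert_eq_self.mpr hp]
  exact hm.2.2.1

lemma ext_line {X Z m : Finset V} (hm : G.IsLine X m) (hXZ : X ⊆ Z) :
    G.IsLine Z (G.ext Z m) := by
  have hsub : m ⊆ G.ext Z m := G.subset_ext hm hXZ
  obtain ⟨a, ha, b, hb, hab⟩ := exists_pair (le_trans (by norm_num) hm.2.1)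
  refine ⟨Finset.filter_subset _ _, le_trans hm.2.1 (Finset.card_le_card hsub), ?_, ?_⟩
  · -- clique
    apply G.star_clique (a := a) (b := b)
    intro x hx
    by_cases hxa : x = a
    · exact Or.inl hxa
    by_cases hxb : x = b
    · exact Or.inr (Or.inl hxb)
    refine Or.inr (Or.inr ?_)
    have hcl : G.IsClique (insert x m) := (Finset.mem_filter.mp hx).2
    exact hcl a (Finset.mem_insert_of_mem ha) b (Finset.mem_insert_of_mem hb) x
      (Finset.mem_insert_self x m) hab (Ne.symm hxb) (Ne.symm hxa)
  · -- maximality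
    intro p hpZ hpe hcl
    apply hpe
    refine Finset.mem_filter.mpr ⟨hpZ, ?_⟩
    exact G.clique_mono (Finset.insert_subset_insert p hsub) hcl

lemma ext_inter {X Z m : Finset V} (hm : G.IsLine X m) (hXZ : X ⊆ Z) :
    G.ext Z m ∩ X = m := by
  apply Finset.Subset.antisymm
  · intro p hp
    obtain ⟨hpe, hpX⟩ := Finset.mem_inter.mp hp
    by_contra hpm
    exact hm.2.2.2 p hpX hpm (Finset.mem_filter.mp hpe).2
  · exact Finset.subset_inter (G.subset_ext hm hXZ) hm.1

lemma line_inter {X Z ℓ : Finset V} (hℓ : G.IsLine Z ℓ) (hXZ : X ⊆ Z)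
    (h3 : 3 ≤ (ℓ ∩ X).card) : G.IsLine X (ℓ ∩ X) := by
  obtain ⟨a, ha, b, hb, hab⟩ := exists_pair (le_trans (by norm_num) h3)
  refine ⟨Finset.inter_subset_right, h3,
    G.clique_mono Finset.inter_subset_left hℓ.2.2.1, ?_⟩
  intro p hpX hpm hcl
  have hpℓ : p ∉ ℓ := fun hpℓ => hpm (Finset.mem_inter.mpr ⟨hpℓ, hpX⟩)
  apply hℓ.2.2.2 p (hXZ hpX) hpℓ
  apply G.star_clique (a := a) (b := b)
  intro x hx
  by_cases hxa : x = a
  · exact Or.inl hxa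
  by_cases hxb : x = b
  · exact Or.inr (Or.inl hxb)
  refine Or.inr (Or.inr ?_)
  rcases Finset.mem_insert.mp hx with rfl | hxℓ
  · exact hcl a (Finset.mem_insert_of_mem ha) b (Finset.mem_insert_of_mem hb) x
      (Finset.mem_insert_self x _) hab (Ne.symm hxb) (Ne.symm hxa)
  · exact hℓ.2.2.1 a ((Finset.inter_subset_left) ha) b ((Finset.inter_subset_left) hb)
      x hxℓ hab (Ne.symm hxb) (Ne.symm hxa)

lemma line_eq_of_two {Z ℓ₁ ℓ₂ : Finset V} (h₁ : G.IsLine Z ℓ₁) (h₂ : G.IsLine Z ℓ₂)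
    (h2 : 2 ≤ (ℓ₁ ∩ ℓ₂).card) : ℓ₁ = ℓ₂ := by
  obtain ⟨a, ha, b, hb, hab⟩ := exists_pair h2
  have ha1 := (Finset.mem_inter.mp ha).1
  have ha2 := (Finset.mem_inter.mp ha).2
  have hb1 := (Finset.mem_inter.mp hb).1
  have hb2 := (Finset.mem_inter.mp hb).2
  have hu : G.IsClique (ℓ₁ ∪ ℓ₂) := by
    apply G.star_clique (a := a) (b := b)
    intro x hx
    by_cases hxa : x = a
    · exact Or.inl hxa
    by_cases hxb : x = b
    · exact Or.inr (Or.inl hxb)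
    refine Or.inr (Or.inr ?_)
    rcases Finset.mem_union.mp hx with hx1 | hx2
    · exact h₁.2.2.1 a ha1 b hb1 x hx1 hab (Ne.symm hxb) (Ne.symm hxa)
    · exact h₂.2.2.1 a ha2 b hb2 x hx2 hab (Ne.symm hxb) (Ne.symm hxa)
  have key : ∀ ℓ ℓ' : Finset V, G.IsLine Z ℓ → G.IsLine Z ℓ' →
      G.IsClique (ℓ ∪ ℓ') → ℓ' ⊆ ℓ := by
    intro ℓ ℓ' hℓ hℓ' hcl x hx
    by_contra hxℓ
    apply hℓ.2.2.2 x (hℓ'.1 hx) hxℓ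
    apply G.clique_mono _ hcl
    exact Finset.insert_subset (Finset.mem_union_right _ hx) Finset.subset_union_left
  exact Finset.Subset.antisymm
    (key ℓ₂ ℓ₁ h₂ h₁ (by rwa [Finset.union_comm]))
    (key ℓ₁ ℓ₂ h₁ h₂ hu)

lemma mem_lines {X ℓ : Finset V} : ℓ ∈ G.lines X ↔ G.IsLine X ℓ := by
  simp [lines]

lemma sum_lines_eq {X Z : Finset V} (hXZ : X ⊆ Z) :
    ∑ m ∈ G.lines X, ((m.card : ℤ) - 2)
      = ∑ ℓ ∈ G.lines Z, (if 3 ≤ (ℓ ∩ X).card then ((ℓ ∩ X).card : ℤ) - 2 else 0) := by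
  rw [← Finset.sum_filter]
  apply Finset.sum_nbij' (i := fun m => G.ext Z m) (j := fun ℓ => ℓ ∩ X)
  · intro m hm
    have hm' := G.mem_lines.mp hm
    refine Finset.mem_filter.mpr ⟨G.mem_lines.mpr (G.ext_line hm' hXZ), ?_⟩
    rw [G.ext_inter hm' hXZ]; exact hm'.2.1
  · intro ℓ hℓ
    obtain ⟨hℓ1, hℓ2⟩ := Finset.mem_filter.mp hℓ
    exact G.mem_lines.mpr (G.line_inter (G.mem_lines.mp hℓ1) hXZ hℓ2)
  · intro m hm
    exact G.ext_inter (G.mem_lines.mp hm) hXZ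
  · intro ℓ hℓ
    obtain ⟨hℓ1, hℓ2⟩ := Finset.mem_filter.mp hℓ
    have hline := G.line_inter (G.mem_lines.mp hℓ1) hXZ hℓ2
    apply G.line_eq_of_two (G.ext_line hline hXZ) (G.mem_lines.mp hℓ1)
    have hsub : ℓ ∩ X ⊆ G.ext Z (ℓ ∩ X) ∩ ℓ :=
      Finset.subset_inter (G.subset_ext hline hXZ) Finset.inter_subset_left
    calc (2 : ℕ) ≤ (ℓ ∩ X).card := le_trans (by norm_num) hℓ2
    _ ≤ _ := Finset.card_le_card hsub
  · intro m hm
    rw [G.ext_inter (G.mem_lines.mp hm) hXZ]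

lemma delta_submod (X Y : Finset V) :
    G.delta (X ∪ Y) + G.delta (X ∩ Y) ≤ G.delta X + G.delta Y := by
  unfold delta
  rw [G.sum_lines_eq (X := X) (Z := X ∪ Y) Finset.subset_union_left,
    G.sum_lines_eq (X := Y) (Z := X ∪ Y) Finset.subset_union_right,
    G.sum_lines_eq (X := X ∩ Y) (Z := X ∪ Y)
      (le_trans Finset.inter_subset_left Finset.subset_union_left)]
  have hcard : (X ∪ Y).card + (X ∩ Y).card = X.card + Y.card :=
    Finset.card_union_add_card_inter X Y
  have hsum : ∑ ℓ ∈ G.lines (X ∪ Y), ((ℓ.card : ℤ) - 2)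
      + ∑ ℓ ∈ G.lines (X ∪ Y), (if 3 ≤ (ℓ ∩ (X ∩ Y)).card then ((ℓ ∩ (X ∩ Y)).card : ℤ) - 2 else 0)
      ≥ ∑ ℓ ∈ G.lines (X ∪ Y), (if 3 ≤ (ℓ ∩ X).card then ((ℓ ∩ X).card : ℤ) - 2 else 0)
      + ∑ ℓ ∈ G.lines (X ∪ Y), (if 3 ≤ (ℓ ∩ Y).card then ((ℓ ∩ Y).card : ℤ) - 2 else 0) := by
    rw [← Finset.sum_add_distrib, ← Finset.sum_add_distrib]
    apply Finset.sum_le_sum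
    intro ℓ hℓ
    have hline := G.mem_lines.mp hℓ
    have hℓ3 := hline.2.1
    have hkey : (ℓ ∩ X).card + (ℓ ∩ Y).card = ℓ.card + (ℓ ∩ (X ∩ Y)).card := by
      have h1 : (ℓ ∩ X) ∪ (ℓ ∩ Y) = ℓ := by
        rw [← Finset.inter_union_distrib_left]
        exact Finset.inter_eq_left.mpr hline.1
      have h2 : (ℓ ∩ X) ∩ (ℓ ∩ Y) = ℓ ∩ (X ∩ Y) := by
        ext x; simp [Finset.mem_inter]; tauto
      have := Finset.card_union_add_card_inter (ℓ ∩ X) (ℓ ∩ Y)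
      rw [h1, h2] at this
      omega
    have hfx : (ℓ ∩ (X ∩ Y)).card ≤ (ℓ ∩ X).card :=
      Finset.card_le_card (fun x hx => by
        simp only [Finset.mem_inter] at hx ⊢; exact ⟨hx.1, hx.2.1⟩)
    have hfy : (ℓ ∩ (X ∩ Y)).card ≤ (ℓ ∩ Y).card :=
      Finset.card_le_card (fun x hx => by
        simp only [Finset.mem_inter] at hx ⊢; exact ⟨hx.1, hx.2.2⟩)
    split_ifs <;> push_cast <;> omega
  have hc : ((X ∪ Y).card : ℤ) + (X ∩ Y).card = (X.card : ℤ) + Y.card := by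
    exact_mod_cast hcard
  linarith

end PlaneGeom

/-- the strong-substructure relation `≤` on `K₀` is transitive. -/
theorem stmt_4 {V : Type} [Fintype V] [DecidableEq V] (G : PlaneGeom V)
    (A B C : Finset V) (hA : G.InK0 A) (hB : G.InK0 B) (hC : G.InK0 C)
    (hAB : G.Strong A B) (hBC : G.Strong B C) : G.Strong A C := by
  refine ⟨hAB.1.trans hBC.1, ?_⟩
  intro X hAX hXC
  have h1 : G.delta B ≤ G.delta (X ∪ B) :=
    hBC.2 (X ∪ B) Finset.subset_union_right (Finset.union_subset hXC hBC.1)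
  have h2 : G.delta (X ∪ B) + G.delta (X ∩ B) ≤ G.delta X + G.delta B :=
    G.delta_submod X B
  have h3 : G.delta A ≤ G.delta (X ∩ B) :=
    hAB.2 (X ∩ B) (Finset.subset_inter hAX hAB.1) Finset.inter_subset_right
  linarith
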